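/- Let N be a positive integer. Then the group Γ₀(N) is generated by its elements of the form (a b; Nc d) with gcd(a, 6) = 1, a ≥ 0 and c ≥ 0; that is, the subgroup of SL₂(ℤ) generated by { (a b; Nc d) ∈ Γ₀(N) : gcd(a,6) = 1, a ≥ 0, c ≥ 0 } equals Γ₀(N). -/

import Mathlib

/-!
Multiplying `γ = (a b; c d)` on the left by `T ^ k` replaces `a` by `a + k c` and keeps the
bottom row. For `c > 0` the column `(a, c)` is coprime, so a unit modulo `6 c` lifting `a`
modulo `c` gives a `k` with `a + k c ≥ 0` coprime to `6`; hence such `γ` lie in the generated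
subgroup. So is `-1 = (1 0; N 1) (-1 0; N -1)`, and every element of `Γ₀(N)` with `c < 0`, or
with `c = 0` and `a = -1`, is `-1` times one that is handled already (for `c = 0` and `a = 1`
the element is itself a generator).
-/

open CongruenceSubgroup MatrixGroups Matrix.SpecialLinearGroup ModularGroup

theorem Int.exists_nonneg_add_mul_isCoprime {a c : ℤ} (h : IsCoprime a c) (hc : c ≠ 0)
    {m : ℕ} (hm : m ≠ 0) : ∃ k : ℤ, 0 ≤ a + k * c ∧ IsCoprime (a + k * c) m := by
  have : NeZero (c.natAbs * m) := ⟨mul_ne_zero (Int.natAbs_ne_zero.2 hc) hm⟩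
  have ha : IsCoprime a (c.natAbs : ℤ) := by rwa [Int.natCast_natAbs, IsCoprime.abs_right_iff]
  obtain ⟨u, hu⟩ := ZMod.unitsMap_surjective (Dvd.intro m rfl) (ZMod.unitOfIsCoprime a ha)
  set b := (u : ZMod (c.natAbs * m)).val
  have hba : ((b : ℤ) : ZMod c.natAbs) = a := by
    simpa [b, ZMod.unitsMap_val, ZMod.natCast_val] using congrArg Units.val hu
  obtain ⟨k, hk⟩ : c ∣ b - a := by
    simpa using (ZMod.intCast_eq_intCast_iff_dvd_sub a b c.natAbs).1 hba.symm
  refine ⟨k, by linarith [Int.natCast_nonneg b], ?_⟩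
  rw [show a + k * c = b by linarith, Nat.isCoprime_iff_coprime]
  exact (ZMod.val_coe_unit_coprime u).coprime_mul_left_right

theorem ModularGroup.T_zpow_mul_apply_zero (n : ℤ) (g : SL(2, ℤ)) (j : Fin 2) :
    (T ^ n * g) 0 j = g 0 j + n * g 1 j := by
  simp [coe_T_zpow, Matrix.mul_apply, Fin.sum_univ_two]

namespace CongruenceSubgroup

def gamma0GcdSixGens (N : ℕ) : Set SL(2, ℤ) :=
  {γ | γ ∈ Gamma0 N ∧ Int.gcd (γ 0 0) 6 = 1 ∧ 0 ≤ γ 0 0 ∧ 0 ≤ γ 1 0}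

variable {N : ℕ}

theorem neg_mem_Gamma0 {γ : SL(2, ℤ)} (hγ : γ ∈ Gamma0 N) : -γ ∈ Gamma0 N := by
  simpa [Gamma0_mem, coe_neg] using hγ

theorem T_mem_gamma0GcdSixGens : T ∈ gamma0GcdSixGens N := by
  simp [gamma0GcdSixGens, Gamma0_mem, coe_T]

theorem mem_closure_gamma0GcdSixGens_of_pos {γ : SL(2, ℤ)} (hγ : γ ∈ Gamma0 N)
    (hc : 0 < γ 1 0) : γ ∈ Subgroup.closure (gamma0GcdSixGens N) := by
  obtain ⟨k, hk₀, hk⟩ :=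
    Int.exists_nonneg_add_mul_isCoprime (isCoprime_col γ 0) hc.ne' (by norm_num : 6 ≠ 0)
  have hkγ : T ^ k * γ ∈ gamma0GcdSixGens N := by
    refine ⟨by simpa [Gamma0_mem] using hγ, ?_, ?_, by simpa using hc.le⟩ <;>
      rw [T_zpow_mul_apply_zero]
    exacts [Int.isCoprime_iff_gcd_eq_one.1 hk, hk₀]
  rw [show γ = T ^ (-k) * (T ^ k * γ) by group]
  exact mul_mem (zpow_mem (Subgroup.subset_closure T_mem_gamma0GcdSixGens) _)
    (Subgroup.subset_closure hkγ)

theorem neg_one_mem_closure_gamma0GcdSixGens (hN : 0 < N) :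
    -1 ∈ Subgroup.closure (gamma0GcdSixGens N) := by
  let L : SL(2, ℤ) := ⟨!![1, 0; (N : ℤ), 1], by simp [Matrix.det_fin_two_of]⟩
  let M : SL(2, ℤ) := ⟨!![-1, 0; (N : ℤ), -1], by simp [Matrix.det_fin_two_of]⟩
  have hLM : L * M = -1 := by
    ext i j
    rw [coe_mul]
    fin_cases i <;> fin_cases j <;> simp [L, M, Matrix.mul_apply]
  have hN' : (0 : ℤ) < N := by exact_mod_cast hN
  rw [← hLM]
  exact mul_mem
    (mem_closure_gamma0GcdSixGens_of_pos (Gamma0_mem.2 (by simp [L])) (by simpa [L] using hN'))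
    (mem_closure_gamma0GcdSixGens_of_pos (Gamma0_mem.2 (by simp [M])) (by simpa [M] using hN'))

theorem mem_closure_gamma0GcdSixGens_of_neg_mem (hN : 0 < N) {γ : SL(2, ℤ)}
    (h : -γ ∈ Subgroup.closure (gamma0GcdSixGens N)) :
    γ ∈ Subgroup.closure (gamma0GcdSixGens N) := by
  simpa using mul_mem (neg_one_mem_closure_gamma0GcdSixGens hN) h

theorem mem_or_neg_mem_gamma0GcdSixGens_of_apply_one_zero_eq_zero {γ : SL(2, ℤ)}
    (hγ : γ ∈ Gamma0 N) (hc : γ 1 0 = 0) :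
    γ ∈ gamma0GcdSixGens N ∨ -γ ∈ gamma0GcdSixGens N := by
  have had : γ 0 0 * γ 1 1 = 1 := by
    simpa [hc] using (Matrix.det_fin_two γ.1).symm.trans γ.det_coe
  rcases Int.eq_one_or_neg_one_of_mul_eq_one' had with ⟨ha, -⟩ | ⟨ha, -⟩
  · exact .inl ⟨hγ, by simp [ha], by simp [ha], hc.ge⟩
  · exact .inr ⟨neg_mem_Gamma0 hγ, by simp [coe_neg, ha], by simp [coe_neg, ha],
      by simp [coe_neg, hc]⟩

end CongruenceSubgroup

/-- for `N > 0`, the group `Γ₀(N)` is generated by its elements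
`(a b; Nc d)` with `gcd(a,6) = 1`, `a ≥ 0` and `c ≥ 0` (the lower-left entry of an element
of `Γ₀(N)` is automatically of the form `Nc`, and `c ≥ 0` is equivalent to the entry being
nonnegative). -/
theorem Gamma0_generated_by_gcd_six_one (N : ℕ) (hN : 0 < N) :
    Subgroup.closure {γ : Matrix.SpecialLinearGroup (Fin 2) ℤ |
        γ ∈ Gamma0 N ∧ Int.gcd (γ 0 0) 6 = 1 ∧ 0 ≤ γ 0 0 ∧ 0 ≤ γ 1 0} = Gamma0 N := by
  change Subgroup.closure (gamma0GcdSixGens N) = Gamma0 N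
  refine le_antisymm ((Subgroup.closure_le _).2 fun γ hγ => hγ.1) fun γ hγ => ?_
  rcases lt_trichotomy (γ 1 0) 0 with hc | hc | hc
  · refine mem_closure_gamma0GcdSixGens_of_neg_mem hN ?_
    exact mem_closure_gamma0GcdSixGens_of_pos (neg_mem_Gamma0 hγ) (by simpa [coe_neg] using hc)
  · rcases mem_or_neg_mem_gamma0GcdSixGens_of_apply_one_zero_eq_zero hγ hc with h | h
    · exact Subgroup.subset_closure h
    · exact mem_closure_gamma0GcdSixGens_of_neg_mem hN (Subgroup.subset_closure h)
  · exact mem_closure_gamma0GcdSixGens_of_pos hγ hc
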